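/- Let M = ⟨V, D, ·_M⟩ be a Σ-PNmatrix and Ax ⊆ L_Σ(P). Suppose there exists Σ^d ⊆ Σ such that M is a rexpansion of some Σ^d-deterministic Σ-PNmatrix and every formula in Ax is Σ^d-simple. Define the Σ-PNmatrix M♯_Ax = ⟨V♯, D♯, ·_{M♯}⟩ by: V♯ = ⋃_{v ∈ Val_M^Ax} {f^A_v : A ∈ L_Σ(P)}; D♯ = {f ∈ V♯ : f(ε) ∈ D}; and for each k-place connective © ∈ Σ, ©_{M♯}(f₁,…,f_k) = ⋃_{v ∈ Val_M^Ax} {f^{©(A₁,…,A_k)}_v : A₁,…,A_k ∈ L_Σ(P) with f^{A_i}_v = f_i for 1 ≤ i ≤ k}. Then M♯_Ax is a rexpansion of M and the consequence relation ⊢_{M♯_Ax} coincides with ⊢_M^Ax, the strengthening of ⊢_M with axioms Ax. -/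

import Mathlib

set_option autoImplicit false

namespace PNPaper

/-- Formulas over a propositional signature given by a type `C` of connectives
with arity function `ar`, generated over a set (type) `P` of sentential variables. -/
inductive Fm (C : Type) (ar : C → ℕ) (P : Type) : Type where
  | var : P → Fm C ar P
  | app : (c : C) → (Fin (ar c) → Fm C ar P) → Fm C ar P

variable {C : Type} {ar : C → ℕ} {P Q : Type} {V W : Type}

/-- Substitution, extended to the unique endomorphism of the formula algebra. -/
def Fm.subst (σ : Q → Fm C ar P) : Fm C ar Q → Fm C ar P
  | .var q => σ q
  | .app c As => .app c (fun i => (As i).subst σ)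

/-- The set of substitution instances of formulas in `Ax`. -/
def instSet (Ax : Set (Fm C ar P)) : Set (Fm C ar P) :=
  {B | ∃ A ∈ Ax, ∃ σ : P → Fm C ar P, B = A.subst σ}

/-- A formula uses only connectives from `S`. -/
def Fm.usesOnly (S : Set C) : Fm C ar P → Prop
  | .var _ => True
  | .app c As => c ∈ S ∧ ∀ i, (As i).usesOnly S

/-- All variables of the formula belong to `Vs`. -/
def Fm.varsIn (Vs : Set P) : Fm C ar P → Prop
  | .var p => p ∈ Vs
  | .app _ As => ∀ i, (As i).varsIn Vs

/-- A Σ-PNmatrix: a set of truth-values (carrier), designated values,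
and a (possibly partial, non-deterministic) truth-table for each connective. -/
structure Mat (C : Type) (ar : C → ℕ) (V : Type) where
  carrier : Set V
  desig : Set V
  int : (c : C) → (Fin (ar c) → V) → Set V

/-- Well-formedness: `D ⊆ V` and truth-tables take values in `V`. -/
def Mat.WF (M : Mat C ar V) : Prop :=
  M.desig ⊆ M.carrier ∧
  ∀ (c : C) (xs : Fin (ar c) → V), (∀ i, xs i ∈ M.carrier) → M.int c xs ⊆ M.carrier

/-- An `M`-valuation. -/
def Mat.IsVal (M : Mat C ar V) (v : Fm C ar P → V) : Prop :=
  (∀ A, v A ∈ M.carrier) ∧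
  ∀ (c : C) (As : Fin (ar c) → Fm C ar P), v (.app c As) ∈ M.int c (fun i => v (As i))

/-- The (single conclusion) consequence relation `⊢_M`. -/
def Mat.Conseq (M : Mat C ar V) (Γ : Set (Fm C ar P)) (A : Fm C ar P) : Prop :=
  ∀ v : Fm C ar P → V, M.IsVal v → (∀ B ∈ Γ, v B ∈ M.desig) → v A ∈ M.desig

/-- The strengthening `⊢_M^Ax` of `⊢_M` with (schema) axioms `Ax`. -/
def Mat.ConseqAx (M : Mat C ar V) (Ax Γ : Set (Fm C ar P)) (A : Fm C ar P) : Prop :=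
  M.Conseq (Γ ∪ instSet Ax) A

/-- The multiple-conclusion consequence relation `▷_M`. -/
def Mat.MConseq (M : Mat C ar V) (Γ Δ : Set (Fm C ar P)) : Prop :=
  ∀ v : Fm C ar P → V, M.IsVal v → (∀ B ∈ Γ, v B ∈ M.desig) → ∃ B ∈ Δ, v B ∈ M.desig

/-- The set `A_M(x₁,…,xₙ)` of possible values of `A` when `pᵢ ↦ xᵢ`. -/
def Mat.fmSet (M : Mat C ar V) (n : ℕ) (A : Fm C ar ℕ) (xs : Fin n → V) : Set V :=
  {y | ∃ v : Fm C ar ℕ → V, M.IsVal v ∧ (∀ i : Fin n, v (Fm.var i.1) = xs i) ∧ v A = y}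

/-- `M` is `S`-deterministic. -/
def Mat.DetOn (M : Mat C ar V) (S : Set C) : Prop :=
  ∀ c ∈ S, ∀ xs : Fin (ar c) → V, (∀ i, xs i ∈ M.carrier) → (M.int c xs).Subsingleton

/-- `M` is total. -/
def Mat.Total (M : Mat C ar V) : Prop :=
  ∀ (c : C) (xs : Fin (ar c) → V), (∀ i, xs i ∈ M.carrier) → (M.int c xs).Nonempty

/-- `M'` is a refinement of `M`. -/
def IsRefinement (M' M : Mat C ar V) : Prop :=
  M'.carrier ⊆ M.carrier ∧
  M'.desig = M.desig ∩ M'.carrier ∧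
  ∀ (c : C) (xs : Fin (ar c) → V), (∀ i, xs i ∈ M'.carrier) → M'.int c xs ⊆ M.int c xs

/-- `E` is an expansion function for `M` with contraction `ct`:
the sets `E x` (for truth-values `x` of `M`) are non-empty and `ct` picks, for each
element of `E x`, the unique `x` it expands (this forces pairwise disjointness). -/
def IsExpansion (M : Mat C ar V) (E : V → Set W) (ct : W → V) : Prop :=
  (∀ x ∈ M.carrier, (E x).Nonempty) ∧
  (∀ x ∈ M.carrier, ∀ y ∈ E x, ct y = x)

/-- The `E`-expansion of `M`. -/
def expMat (M : Mat C ar V) (E : V → Set W) (ct : W → V) : Mat C ar W where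
  carrier := ⋃ x ∈ M.carrier, E x
  desig := ⋃ x ∈ M.desig, E x
  int := fun c ys => ⋃ x ∈ M.int c (fun i => ct (ys i)), E x

/-- A rexpansion of `M` is a refinement of some `E`-expansion of `M`. -/
def IsRexpansion (M' : Mat C ar W) (M : Mat C ar V) : Prop :=
  ∃ (E : V → Set W) (ct : W → V), IsExpansion M E ct ∧ IsRefinement M' (expMat M E ct)

/-- The 1-place connectives of the signature that are not in `Σᵈ`. -/
def UC (C : Type) (ar : C → ℕ) (Sd : Set C) : Type := {c : C // ar c = 1 ∧ c ∉ Sd}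

/-- The formula `wA` obtained by prefixing `A` with the string `w ∈ U*` of
1-place connectives. -/
def prefixFm {C : Type} {ar : C → ℕ} {Sd : Set C}
    (w : List (UC C ar Sd)) (A : Fm C ar ℕ) : Fm C ar ℕ :=
  w.foldr (fun c B => Fm.app c.1 (fun _ => B)) A

/-- A set of strings is closed under taking prefixes. -/
def PrefixClosed {α : Type} (Th : Set (List α)) : Prop :=
  ∀ s t : List α, s <+: t → t ∈ Th → s ∈ Th

/-- `B` is a `Σᵈ`-simple formula (based on some connective `c`), with all prefixes of
the strings used in its decomposition belonging to the look-ahead set `Th`: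
`B = A^σ` for a structure formula `A ∈ L_{Σᵈ}({q₁,…,qₙ,r₁,…,r_m})` and a substitution
`σ` with `σ(qᵢ) = wᵢ p_{jᵢ}` and `σ(r_l) = u_l c(p₁,…,p_k)`. -/
def SimpleWithin {C : Type} {ar : C → ℕ} (Sd : Set C)
    (Th : Set (List (UC C ar Sd))) (B : Fm C ar ℕ) : Prop :=
  ∃ (c : C) (n m : ℕ) (A : Fm C ar (Fin n ⊕ Fin m))
    (w : Fin n → List (UC C ar Sd)) (j : Fin n → Fin (ar c))
    (u : Fin m → List (UC C ar Sd)) (p : Fin (ar c) → ℕ),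
      Function.Injective p ∧ A.usesOnly Sd ∧
      B = A.subst (Sum.elim
            (fun i => prefixFm (w i) (Fm.var (p (j i))))
            (fun l => prefixFm (u l) (Fm.app c (fun i => Fm.var (p i))))) ∧
      (∀ i t, t <+: w i → t ∈ Th) ∧ (∀ l t, t <+: u l → t ∈ Th)

/-- `Val_M^Ax`: the `M`-valuations designating all instances of the axioms. -/
def ValAx {C : Type} {ar : C → ℕ} {V : Type} (M : Mat C ar V)
    (Ax : Set (Fm C ar ℕ)) : Set (Fm C ar ℕ → V) :=
  {v | M.IsVal v ∧ ∀ B ∈ instSet Ax, v B ∈ M.desig}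

/-- The look-ahead function `f^A_v : Θ → V`, `f^A_v(w) = v(wA)`. -/
def fA {C : Type} {ar : C → ℕ} {V : Type} {Sd : Set C}
    (Th : Set (List (UC C ar Sd))) (v : Fm C ar ℕ → V) (A : Fm C ar ℕ) : ↥Th → V :=
  fun w => v (prefixFm w.1 A)

/-- The PNmatrix `M♯_Ax` of the ♯-construction (Theorem `theconstruction`). -/
def sharpMat {C : Type} {ar : C → ℕ} {V : Type} {Sd : Set C}
    (M : Mat C ar V) (Ax : Set (Fm C ar ℕ)) (Th : Set (List (UC C ar Sd)))
    (hε : [] ∈ Th) : Mat C ar (↥Th → V) where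
  carrier := {f | ∃ v ∈ ValAx M Ax, ∃ A, f = fA Th v A}
  desig := {f | (∃ v ∈ ValAx M Ax, ∃ A, f = fA Th v A) ∧ f ⟨[], hε⟩ ∈ M.desig}
  int := fun c fs =>
    {g | ∃ v ∈ ValAx M Ax, ∃ As : Fin (ar c) → Fm C ar ℕ,
      (∀ i, fA Th v (As i) = fs i) ∧ g = fA Th v (Fm.app c As)}

/-! Evaluating a look-ahead table at `ε` contracts `M♯_Ax` onto `M`, which makes it a
rexpansion, and every `v ∈ Val_M^Ax` gives the `M♯_Ax`-valuation `A ↦ f^A_v`. Conversely an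
`M♯_Ax`-valuation `s` yields the `M`-valuation `u = s(·)(ε)`, and the point is that `u` respects
the axioms. Given an instance `B^τ` of a `Σᵈ`-simple axiom based on `c`, the table
`s(c(τp₁,…,τpₖ))` is some `f^{c(B₁,…,Bₖ)}_v` with `v ∈ Val_M^Ax` and `f^{Bᵢ}_v = s(τpᵢ)`. Since
tables record the values of prefixed formulas, `u` agrees on the leaves of `B^τ` with `v` on the
leaves of `B^ρ`, `ρ pᵢ = Bᵢ`; the structure formula of `B` uses only `Σᵈ`-connectives, on which `M`
contracts to the deterministic `M₀`, so `u(B^τ)` is designated along with `v(B^ρ)`. -/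

theorem Fm.subst_subst {R : Type} (A : Fm C ar R) (σ : R → Fm C ar Q) (τ : Q → Fm C ar P) :
    (A.subst σ).subst τ = A.subst (fun q => (σ q).subst τ) := by
  induction A with
  | var q => rfl
  | app c As ih => exact congrArg (Fm.app c) (funext ih)

section Prefix

variable {Sd : Set C}

theorem prefixFm_subst (w : List (UC C ar Sd)) (A : Fm C ar ℕ) (τ : ℕ → Fm C ar ℕ) :
    (prefixFm w A).subst τ = prefixFm w (A.subst τ) := by
  induction w with
  | nil => rfl
  | cons d w ih => exact congrArg (Fm.app d.1) (funext fun _ => ih)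

theorem prefixFm_append (s t : List (UC C ar Sd)) (A : Fm C ar ℕ) :
    prefixFm (s ++ t) A = prefixFm s (prefixFm t A) := by
  simp only [prefixFm, List.foldr_append]

theorem app_eq_prefixFm_singleton (d : UC C ar Sd) (Bs : Fin (ar d.1) → Fm C ar ℕ)
    (i : Fin (ar d.1)) : Fm.app d.1 Bs = prefixFm [d] (Bs i) := by
  refine congrArg (Fm.app d.1) (funext fun k => congrArg Bs (Fin.ext ?_))
  have := d.2.1
  omega

end Prefix

section Rexpansion

variable {V₀ : Type} {M : Mat C ar V} {M₀ : Mat C ar V₀} {E : V₀ → Set V} {ct : V → V₀}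

theorem IsRefinement.contract_mem_carrier (hexp : IsExpansion M₀ E ct)
    (href : IsRefinement M (expMat M₀ E ct)) {y : V} (hy : y ∈ M.carrier) :
    ct y ∈ M₀.carrier ∧ y ∈ E (ct y) := by
  obtain ⟨x, hx, hyx⟩ := Set.mem_iUnion₂.1 (href.1 hy)
  rw [hexp.2 x hx y hyx]
  exact ⟨hx, hyx⟩

theorem IsRefinement.contract_mem_int (hWF₀ : M₀.WF) (hexp : IsExpansion M₀ E ct)
    (href : IsRefinement M (expMat M₀ E ct)) {c : C} {xs : Fin (ar c) → V}
    (hxs : ∀ i, xs i ∈ M.carrier) {y : V} (hy : y ∈ M.int c xs) :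
    ct y ∈ M₀.int c (fun i => ct (xs i)) := by
  obtain ⟨x, hx, hyx⟩ := Set.mem_iUnion₂.1 (href.2.2 c xs hxs hy)
  have hx₀ : x ∈ M₀.carrier :=
    hWF₀.2 c _ (fun i => (href.contract_mem_carrier hexp (hxs i)).1) hx
  rwa [hexp.2 x hx₀ y hyx]

theorem IsRefinement.mem_desig_iff_contract (hWF₀ : M₀.WF) (hexp : IsExpansion M₀ E ct)
    (href : IsRefinement M (expMat M₀ E ct)) {y : V} (hy : y ∈ M.carrier) :
    y ∈ M.desig ↔ ct y ∈ M₀.desig := by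
  rw [href.2.1]
  constructor
  · rintro ⟨hyD, -⟩
    obtain ⟨x, hx, hyx⟩ := Set.mem_iUnion₂.1 hyD
    rwa [hexp.2 x (hWF₀.1 hx) y hyx]
  · exact fun hD => ⟨Set.mem_iUnion₂.2 ⟨ct y, hD, (href.contract_mem_carrier hexp hy).2⟩, hy⟩

theorem IsRefinement.isVal_contract (hWF₀ : M₀.WF) (hexp : IsExpansion M₀ E ct)
    (href : IsRefinement M (expMat M₀ E ct)) {v : Fm C ar P → V} (hv : M.IsVal v) :
    M₀.IsVal (fun A => ct (v A)) :=
  ⟨fun A => (href.contract_mem_carrier hexp (hv.1 A)).1,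
    fun c As => href.contract_mem_int hWF₀ hexp (fun i => hv.1 (As i)) (hv.2 c As)⟩

theorem Mat.DetOn.val_subst_eq {Sd : Set C} (hdet : M₀.DetOn Sd) {v₁ v₂ : Fm C ar P → V₀}
    (hv₁ : M₀.IsVal v₁) (hv₂ : M₀.IsVal v₂) {A : Fm C ar Q} (hA : A.usesOnly Sd)
    {σ₁ σ₂ : Q → Fm C ar P} (hleaf : ∀ q, v₁ (σ₁ q) = v₂ (σ₂ q)) :
    v₁ (A.subst σ₁) = v₂ (A.subst σ₂) := by
  induction A with
  | var q => exact hleaf q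
  | app d As ih =>
    obtain ⟨hd, hAs⟩ := hA
    have hargs : (fun i => v₁ ((As i).subst σ₁)) = fun i => v₂ ((As i).subst σ₂) :=
      funext fun i => ih i (hAs i)
    have h₁ := hv₁.2 d (fun i => (As i).subst σ₁)
    rw [hargs] at h₁
    exact hdet d hd _ (fun i => hv₂.1 _) h₁ (hv₂.2 d _)

theorem IsRexpansion.mem_desig_subst_iff {Sd : Set C} (hWF₀ : M₀.WF) (hdet : M₀.DetOn Sd)
    (hrex : IsRexpansion M M₀) {v₁ v₂ : Fm C ar P → V} (hv₁ : M.IsVal v₁) (hv₂ : M.IsVal v₂)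
    {A : Fm C ar Q} (hA : A.usesOnly Sd) {σ₁ σ₂ : Q → Fm C ar P}
    (hleaf : ∀ q, v₁ (σ₁ q) = v₂ (σ₂ q)) :
    v₁ (A.subst σ₁) ∈ M.desig ↔ v₂ (A.subst σ₂) ∈ M.desig := by
  obtain ⟨E, ct, hexp, href⟩ := hrex
  rw [href.mem_desig_iff_contract hWF₀ hexp (hv₁.1 _),
    href.mem_desig_iff_contract hWF₀ hexp (hv₂.1 _),
    hdet.val_subst_eq (href.isVal_contract hWF₀ hexp hv₁) (href.isVal_contract hWF₀ hexp hv₂)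
      hA (fun q => congrArg ct (hleaf q))]

end Rexpansion

section Sharp

variable {Sd : Set C} (M : Mat C ar V) (Ax : Set (Fm C ar ℕ)) {Th : Set (List (UC C ar Sd))}
  (hε : [] ∈ Th)

@[simp]
theorem fA_nil (v : Fm C ar ℕ → V) (A : Fm C ar ℕ) : fA Th v A ⟨[], hε⟩ = v A := rfl

theorem sharpMat_isRexpansion : IsRexpansion (sharpMat M Ax Th hε) M := by
  refine ⟨fun x => {f | f ⟨[], hε⟩ = x}, fun f => f ⟨[], hε⟩,
    ⟨fun x _ => ⟨fun _ => x, rfl⟩, fun x _ f hf => hf⟩, ?_, ?_, ?_⟩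
  · rintro f ⟨v, hv, A, rfl⟩
    exact Set.mem_iUnion₂.2 ⟨v A, hv.1.1 A, rfl⟩
  · ext f
    refine ⟨fun ⟨hf, hD⟩ => ⟨Set.mem_iUnion₂.2 ⟨_, hD, rfl⟩, hf⟩, fun ⟨hD, hf⟩ => ⟨hf, ?_⟩⟩
    obtain ⟨x, hx, rfl⟩ := Set.mem_iUnion₂.1 hD
    exact hx
  · rintro c fs - g ⟨v, hv, As, hAs, rfl⟩
    refine Set.mem_iUnion₂.2 ⟨v (Fm.app c As), ?_, rfl⟩
    simpa only [← hAs, fA_nil] using hv.1.2 c As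

theorem fA_isVal_sharpMat {v : Fm C ar ℕ → V} (hv : v ∈ ValAx M Ax) :
    (sharpMat M Ax Th hε).IsVal (fA Th v) :=
  ⟨fun A => ⟨v, hv, A, rfl⟩, fun _ As => ⟨v, hv, As, fun _ => rfl, rfl⟩⟩

variable {M Ax hε} {s : Fm C ar ℕ → ↥Th → V}

theorem Mat.IsVal.sharpMat_eval_nil (hs : (sharpMat M Ax Th hε).IsVal s) :
    M.IsVal (fun X => s X ⟨[], hε⟩) := by
  refine ⟨fun X => ?_, fun c As => ?_⟩
  · obtain ⟨v, hv, A, hA⟩ := hs.1 X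
    simpa only [hA, fA_nil] using hv.1.1 A
  · obtain ⟨v, hv, Bs, hBs, happ⟩ := hs.2 c As
    simpa only [happ, ← hBs, fA_nil] using hv.1.2 c Bs

theorem Mat.IsVal.sharpMat_prefixFm (hpc : PrefixClosed Th)
    (hs : (sharpMat M Ax Th hε).IsVal s) (w : List (UC C ar Sd)) (X : Fm C ar ℕ)
    (t : List (UC C ar Sd)) (h : t ++ w ∈ Th) (h' : t ∈ Th) :
    s (prefixFm w X) ⟨t, h'⟩ = s X ⟨t ++ w, h⟩ := by
  induction w generalizing t with
  | nil => exact congrArg (s X) (Subtype.ext (List.append_nil t).symm)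
  | cons d w ih =>
    obtain ⟨v, -, Bs, hBs, happ⟩ := hs.2 d.1 (fun _ => prefixFm w X)
    have hi₀ : 0 < ar d.1 := by rw [d.2.1]; exact Nat.one_pos
    have htd : t ++ [d] ∈ Th := hpc _ _ ⟨w, by simp⟩ h
    have htdw : t ++ [d] ++ w ∈ Th := by simpa using h
    calc s (prefixFm (d :: w) X) ⟨t, h'⟩
        = v (prefixFm t (Fm.app d.1 Bs)) := congrFun happ ⟨t, h'⟩
      _ = fA Th v (Bs ⟨0, hi₀⟩) ⟨t ++ [d], htd⟩ := by
        rw [app_eq_prefixFm_singleton d Bs ⟨0, hi₀⟩, ← prefixFm_append]; rfl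
      _ = s X ⟨t ++ [d] ++ w, htdw⟩ := by rw [hBs]; exact ih _ htdw htd
      _ = s X ⟨t ++ (d :: w), h⟩ := congrArg (s X) (Subtype.ext (by simp))

theorem Mat.IsVal.sharpMat_prefixFm_eval_nil_of_fA_eq (hpc : PrefixClosed Th)
    (hs : (sharpMat M Ax Th hε).IsVal s) {v : Fm C ar ℕ → V} {X Y : Fm C ar ℕ}
    (hXY : fA Th v X = s Y) {w : List (UC C ar Sd)} (hw : w ∈ Th) :
    v (prefixFm w X) = s (prefixFm w Y) ⟨[], hε⟩ :=
  (congrFun hXY ⟨w, hw⟩).trans (hs.sharpMat_prefixFm hpc w Y [] hw hε).symm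

theorem Mat.IsVal.sharpMat_eval_nil_subst_mem_desig {V₀ : Type} {M₀ : Mat C ar V₀}
    (hWF₀ : M₀.WF) (hdet : M₀.DetOn Sd) (hrex : IsRexpansion M M₀) (hpc : PrefixClosed Th)
    (hs : (sharpMat M Ax Th hε).IsVal s) {B : Fm C ar ℕ} (hBAx : B ∈ Ax)
    (hB : SimpleWithin Sd Th B) (τ : ℕ → Fm C ar ℕ) :
    s (B.subst τ) ⟨[], hε⟩ ∈ M.desig := by
  obtain ⟨c, n, m, A, w, j, u, p, hp, hA, rfl, hw, hu⟩ := hB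
  obtain ⟨v, hv, Bs, hBs, happ⟩ := hs.2 c (fun i => τ (p i))
  have hρ : ∀ i, Function.extend p Bs Fm.var (p i) = Bs i := hp.extend_apply Bs Fm.var
  have hvB := hv.2 _ ⟨_, hBAx, Function.extend p Bs Fm.var, rfl⟩
  rw [Fm.subst_subst] at hvB ⊢
  refine (hrex.mem_desig_subst_iff hWF₀ hdet hv.1 hs.sharpMat_eval_nil hA ?_).1 hvB
  rintro (i | l)
  · simp only [Sum.elim_inl, prefixFm_subst, Fm.subst, hρ]
    exact hs.sharpMat_prefixFm_eval_nil_of_fA_eq hpc (hBs (j i)) (hw i _ List.prefix_rfl)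
  · simp only [Sum.elim_inr, prefixFm_subst, Fm.subst, hρ]
    exact hs.sharpMat_prefixFm_eval_nil_of_fA_eq hpc happ.symm (hu l _ List.prefix_rfl)

theorem Mat.IsVal.sharpMat_eval_nil_mem_valAx {V₀ : Type} {M₀ : Mat C ar V₀}
    (hWF₀ : M₀.WF) (hdet : M₀.DetOn Sd) (hrex : IsRexpansion M M₀) (hpc : PrefixClosed Th)
    (hAx : ∀ B ∈ Ax, SimpleWithin Sd Th B) (hs : (sharpMat M Ax Th hε).IsVal s) :
    (fun X => s X ⟨[], hε⟩) ∈ ValAx M Ax := by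
  refine ⟨hs.sharpMat_eval_nil, ?_⟩
  rintro _ ⟨B, hB, τ, rfl⟩
  exact hs.sharpMat_eval_nil_subst_mem_desig hWF₀ hdet hrex hpc hB (hAx B hB) τ

end Sharp

theorem stmt9_general {C : Type} {ar : C → ℕ} {V V₀ : Type} {Sd : Set C}
    (M : Mat C ar V) (Ax : Set (Fm C ar ℕ))
    (M₀ : Mat C ar V₀) (hWF₀ : M₀.WF) (hdet : M₀.DetOn Sd) (hrex : IsRexpansion M M₀)
    (Th : Set (List (UC C ar Sd))) (hε : [] ∈ Th) (hpc : PrefixClosed Th)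
    (hAx : ∀ B ∈ Ax, SimpleWithin Sd Th B) :
    IsRexpansion (sharpMat M Ax Th hε) M ∧
    ∀ (Γ : Set (Fm C ar ℕ)) (A : Fm C ar ℕ),
      M.ConseqAx Ax Γ A ↔ (sharpMat M Ax Th hε).Conseq Γ A := by
  refine ⟨sharpMat_isRexpansion M Ax hε, fun Γ A => ⟨fun h s hs hΓ => ?_, fun h v hv hΓ => ?_⟩⟩
  · have hu := hs.sharpMat_eval_nil_mem_valAx hWF₀ hdet hrex hpc hAx
    refine ⟨hs.1 A, h _ hu.1 ?_⟩
    rintro B (hB | hB)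
    exacts [(hΓ B hB).2, hu.2 B hB]
  · have hvAx : v ∈ ValAx M Ax := ⟨hv, fun B hB => hΓ B (Or.inr hB)⟩
    exact (h _ (fA_isVal_sharpMat M Ax hε hvAx) fun B hB => ⟨⟨v, hvAx, B, rfl⟩, hΓ B (Or.inl hB)⟩).2

/-- Theorem `theconstruction`: if `M` is a rexpansion of some
`Σᵈ`-deterministic PNmatrix and all axioms in `Ax` are `Σᵈ`-simple (with look-ahead
set `Θ_Ax = Th`), then `M♯_Ax` is a rexpansion of `M` and `⊢_{M♯_Ax}` coincides with
the strengthening `⊢_M^Ax`. -/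
theorem stmt9 {C : Type} {ar : C → ℕ} {V V₀ : Type} {Sd : Set C}
    (M : Mat C ar V) (hWF : M.WF) (Ax : Set (Fm C ar ℕ))
    (M₀ : Mat C ar V₀) (hWF₀ : M₀.WF) (hdet : M₀.DetOn Sd) (hrex : IsRexpansion M M₀)
    (Th : Set (List (UC C ar Sd))) (hε : [] ∈ Th) (hpc : PrefixClosed Th)
    (hAx : ∀ B ∈ Ax, SimpleWithin Sd Th B) :
    IsRexpansion (sharpMat M Ax Th hε) M ∧
    ∀ (Γ : Set (Fm C ar ℕ)) (A : Fm C ar ℕ),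
      M.ConseqAx Ax Γ A ↔ (sharpMat M Ax Th hε).Conseq Γ A :=
  stmt9_general M Ax M₀ hWF₀ hdet hrex Th hε hpc hAx

end PNPaper
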